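/- arXiv:2012.12967 — 3 statements merged into one kernel-verified Lean document; each statement's English description precedes it below -/
import Mathlib

section
/- For the fermionic-anyon matrices on (ℂ²)^{⊗m} and any two modes i < j, the beam-splitter Hamiltonian H = ξᵢ†ξⱼ + ξⱼ†ξᵢ satisfies H³ = H. -/
open scoped BigOperators
open Matrix

/-- `σ = [[0,1],[0,0]]`, the single-mode annihilation matrix. -/
def sigMat : Matrix (Fin 2) (Fin 2) ℂ := !![0, 1; 0, 0]

/-- `D = diag(1, −e^{iφ})`, the Jordan–Wigner string matrix. -/
noncomputable def dMat (φ : ℝ) : Matrix (Fin 2) (Fin 2) ℂ :=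
  !![1, 0; 0, -Complex.exp (Complex.I * φ)]

/-- The fermionic-anyon annihilation matrix `ξᵢ = D^{⊗(i−1)} ⊗ σ ⊗ I₂^{⊗(m−i)}` on
`(ℂ²)^{⊗m}`, realized entrywise on tensor indices `Fin m → Fin 2`. -/
noncomputable def xi (m : ℕ) (φ : ℝ) (i : Fin m) :
    Matrix (Fin m → Fin 2) (Fin m → Fin 2) ℂ :=
  Matrix.of fun r c => ∏ k : Fin m,
    if k < i then dMat φ (r k) (c k)
    else if k = i then sigMat (r k) (c k)
    else if r k = c k then 1 else 0

/-!
Write `A = ξᵢ†ξⱼ`, so that the Hamiltonian is `A + A†`. Both `ξᵢ` and `ξⱼ` are Kronecker products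
of 2×2 factors, hence so is `A`, with factors `fᵢ(k)† fⱼ(k)`. For `i < j` each of these is a unitary,
`σ` or `σ†D`, hence a partial isometry, and the factor at `k = j` is `σ`, which squares to zero.
So `A A† A = A` and `A² = 0`; expanding `(A + A†)³`, every word containing `A A` or `A† A†` vanishes
and the two survivors are `A A† A = A` and `A† A A† = A†`.
-/

section PartialIsometry

variable {R : Type*}

def IsPartialIsometry [Mul R] [Star R] (a : R) : Prop := a * star a * a = a

theorem IsPartialIsometry.add_star_pow_three [Semiring R] [StarRing R] {a : R}
    (ha : IsPartialIsometry a) (ha2 : a * a = 0) : (a + star a) ^ 3 = a + star a := by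
  have hs2 : star a * star a = 0 := by rw [← star_mul, ha2, star_zero]
  have hs : star a * a * star a = star a := by
    simpa only [star_mul, star_star, mul_assoc] using congrArg star ha
  have hsq : (a + star a) * (a + star a) = a * star a + star a * a := by
    rw [add_mul, mul_add, mul_add, ha2, hs2, zero_add, add_zero, add_comm]
  calc (a + star a) ^ 3 = (a * star a + star a * a) * (a + star a) := by rw [pow_three', hsq]
    _ = a * star a * a + star a * a * star a := by
      simp only [add_mul, mul_add, mul_assoc, ha2, hs2, mul_zero, add_zero, zero_add]
    _ = a + star a := by rw [ha, hs]

section Monoid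

variable [Monoid R] [StarMul R] {a u : R}

theorem IsPartialIsometry.of_mem_unitary (hu : u ∈ unitary R) : IsPartialIsometry u := by
  rw [IsPartialIsometry, Unitary.mul_star_self_of_mem hu, one_mul]

theorem IsPartialIsometry.mul_mem_unitary (ha : IsPartialIsometry a) (hu : u ∈ unitary R) :
    IsPartialIsometry (a * u) := by
  calc a * u * star (a * u) * (a * u) = a * (u * star u) * star a * a * u := by
        simp only [star_mul, mul_assoc]
    _ = a * u := by rw [Unitary.mul_star_self_of_mem hu, mul_one, ha]

theorem IsPartialIsometry.star (ha : IsPartialIsometry a) : IsPartialIsometry (star a) := by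
  rw [IsPartialIsometry] at ha ⊢
  conv_rhs => rw [← ha]
  simp only [star_mul, star_star, mul_assoc]

end Monoid

end PartialIsometry

namespace Matrix

variable {ι R l n o : Type*} [Fintype ι] [CommSemiring R]

def piKronecker (f : ι → Matrix l n R) : Matrix (ι → l) (ι → n) R :=
  of fun r c => ∏ k, f k (r k) (c k)

theorem piKronecker_mul [DecidableEq ι] [Fintype n] (f : ι → Matrix l n R)
    (g : ι → Matrix n o R) : piKronecker f * piKronecker g = piKronecker fun k => f k * g k := by
  ext r c
  simp only [piKronecker, mul_apply, of_apply, ← Finset.prod_mul_distrib, Fintype.prod_sum]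

theorem conjTranspose_piKronecker [StarRing R] (f : ι → Matrix l n R) :
    (piKronecker f)ᴴ = piKronecker fun k => (f k)ᴴ := by
  ext r c
  simp only [piKronecker, conjTranspose_apply, of_apply, star_prod]

theorem piKronecker_eq_zero_of_eq_zero {f : ι → Matrix l n R} (k : ι) (hk : f k = 0) :
    piKronecker f = 0 := by
  ext r c
  exact Finset.prod_eq_zero (Finset.mem_univ k) (by simp [hk])

theorem isPartialIsometry_piKronecker [DecidableEq ι] [Fintype n] [StarRing R]
    {f : ι → Matrix n n R} (hf : ∀ k, IsPartialIsometry (f k)) :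
    IsPartialIsometry (piKronecker f) := by
  simp only [IsPartialIsometry, star_eq_conjTranspose, conjTranspose_piKronecker,
    piKronecker_mul]
  exact congrArg piKronecker (funext hf)

end Matrix

theorem sigMat_mul_self : sigMat * sigMat = 0 := by
  ext a b
  fin_cases a <;> fin_cases b <;> simp [sigMat, mul_apply]

theorem isPartialIsometry_sigMat : IsPartialIsometry sigMat := by
  ext a b
  fin_cases a <;> fin_cases b <;>
    simp only [sigMat, star_eq_conjTranspose, mul_apply, conjTranspose_apply,
      Fin.sum_univ_two] <;> simp

theorem dMat_mem_unitary (φ : ℝ) : dMat φ ∈ unitary (Matrix (Fin 2) (Fin 2) ℂ) := by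
  have hexp : starRingEnd ℂ (Complex.exp (Complex.I * φ)) * Complex.exp (Complex.I * φ) = 1 := by
    rw [Complex.conj_mul', Complex.norm_exp_I_mul_ofReal, Complex.ofReal_one, one_pow]
  rw [← unitaryGroup, mem_unitaryGroup_iff']
  ext a b
  fin_cases a <;> fin_cases b <;> simp [dMat, mul_apply, star_eq_conjTranspose, hexp]

noncomputable def xiFactor {m : ℕ} (φ : ℝ) (i k : Fin m) : Matrix (Fin 2) (Fin 2) ℂ :=
  if k < i then dMat φ else if k = i then sigMat else 1

theorem xi_eq_piKronecker (m : ℕ) (φ : ℝ) (i : Fin m) :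
    xi m φ i = piKronecker (xiFactor φ i) := by
  ext r c
  simp only [xi, piKronecker, of_apply]
  refine Finset.prod_congr rfl fun k _ => ?_
  simp only [xiFactor]
  split_ifs <;> simp_all [one_apply]

theorem isPartialIsometry_conjTranspose_xiFactor_mul {m : ℕ} (φ : ℝ) {i j : Fin m} (hij : i < j)
    (k : Fin m) : IsPartialIsometry ((xiFactor φ i k)ᴴ * xiFactor φ j k) := by
  have hD := dMat_mem_unitary φ
  rcases lt_trichotomy k i with hki | rfl | hik
  · simp only [xiFactor, hki, hki.trans hij, if_true]
    exact .of_mem_unitary (Submonoid.mul_mem _ (Unitary.star_mem hD) hD)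
  · simp only [xiFactor, lt_irrefl, hij, if_true, if_false]
    exact isPartialIsometry_sigMat.star.mul_mem_unitary hD
  rcases lt_trichotomy k j with hkj | rfl | hjk
  · simp only [xiFactor, hik.not_gt, hik.ne', hkj, if_true, if_false, conjTranspose_one, one_mul]
    exact .of_mem_unitary hD
  · simp only [xiFactor, hik.not_gt, hik.ne', lt_irrefl, if_true, if_false, conjTranspose_one, one_mul]
    exact isPartialIsometry_sigMat
  · simp only [xiFactor, hik.not_gt, hik.ne', hjk.not_gt, hjk.ne', if_false, conjTranspose_one, one_mul]
    exact .of_mem_unitary (Submonoid.one_mem _)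

/-- **The fermionic-anyon beam-splitter Hamiltonian is tripotent.** For any two modes
`i < j`, the Hamiltonian `H = ξᵢ†ξⱼ + ξⱼ†ξᵢ` satisfies `H³ = H` (a consequence of the
Pauli exclusion principle). -/
theorem fermionic_anyon_bs_hamiltonian_tripotent (m : ℕ) (φ : ℝ) (i j : Fin m)
    (hij : i < j) :
    ((xi m φ i)ᴴ * xi m φ j + (xi m φ j)ᴴ * xi m φ i) ^ 3
      = (xi m φ i)ᴴ * xi m φ j + (xi m φ j)ᴴ * xi m φ i := by
  have hA : (xi m φ i)ᴴ * xi m φ j = piKronecker fun k => (xiFactor φ i k)ᴴ * xiFactor φ j k := by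
    rw [xi_eq_piKronecker, xi_eq_piKronecker, conjTranspose_piKronecker, piKronecker_mul]
  have hB : (xi m φ j)ᴴ * xi m φ i = star ((xi m φ i)ᴴ * xi m φ j) := by
    rw [star_eq_conjTranspose, conjTranspose_mul, conjTranspose_conjTranspose]
  rw [hB, hA]
  refine IsPartialIsometry.add_star_pow_three
    (isPartialIsometry_piKronecker (isPartialIsometry_conjTranspose_xiFactor_mul φ hij)) ?_
  rw [piKronecker_mul]
  refine piKronecker_eq_zero_of_eq_zero j ?_
  simp only [xiFactor, lt_irrefl, hij.not_gt, hij.ne', if_true, if_false, conjTranspose_one,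
    one_mul, sigMat_mul_self]
end

section
/- For the fermionic-anyon matrices on (ℂ²)^{⊗m}, any two modes i < j, and all real θ, the anyonic beam splitter BS_{ij}(θ) = exp(iθ(ξᵢ†ξⱼ + ξⱼ†ξᵢ)) acts on creation operators by the nonlinear conjugation identities: BS_{ij}(θ)·ξᵢ†·BS_{ij}(−θ) = cos θ · ξᵢ† + i·sin θ · ξⱼ†·exp(iφ·ξᵢ†ξᵢ), and BS_{ij}(θ)·ξⱼ†·BS_{ij}(−θ) = cos θ · ξⱼ† + i·sin θ · ξᵢ†·exp(−iφ·ξⱼ†ξⱼ). -/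
open scoped BigOperators
open Matrix

/-- The anyonic beam splitter `BS_{ij}(θ) = exp(iθ(ξᵢ†ξⱼ + ξⱼ†ξᵢ))`. -/
noncomputable def bs (m : ℕ) (φ : ℝ) (i j : Fin m) (θ : ℝ) :
    Matrix (Fin m → Fin 2) (Fin m → Fin 2) ℂ :=
  NormedSpace.exp ((Complex.I * θ) • ((xi m φ i)ᴴ * xi m φ j + (xi m φ j)ᴴ * xi m φ i))

/-!
Write `H = ξᵢ†ξⱼ + ξⱼ†ξᵢ`, so that `BS_{ij}(θ) = exp(iθH)`. If `[H, B] = K` and `[H, K] = B`, then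
`exp(iθH) B exp(−iθH) = cos θ · B + i sin θ · K`: with `A = iH`, the function
`t ↦ exp(−tA) (cos t · B + sin t · i K) exp(tA)` has zero derivative. So it suffices to check the
two pairs of commutators, with `K = ξⱼ†·exp(iφ nᵢ)` for `B = ξᵢ†` and `K = ξᵢ†·exp(−iφ nⱼ)` for
`B = ξⱼ†`, where `nₖ = ξₖ†ξₖ`.

All operators involved are Kronecker products over the modes which are `1` or a string factor
`D`, `D†` away from `i` and `j`, so this is a computation in the two-dimensional algebras at the
sites `i` and `j`. There `exp(iφ n)` turns the string factor `D†` of `ξⱼ†` at site `i` into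
`diag(1, −1)`, which is where the nonlinear factor comes from.
-/

section Rotation

open NormedSpace

variable {𝔸 : Type*} [NormedRing 𝔸] [NormedAlgebra ℝ 𝔸] [CompleteSpace 𝔸]

theorem exp_smul_mul_mul_exp_neg_smul_of_commutator {A B C : 𝔸} (hB : A * B - B * A = C)
    (hC : A * C - C * A = -B) (θ : ℝ) :
    exp (θ • A) * B * exp ((-θ) • A) = Real.cos θ • B + Real.sin θ • C := by
  set M : ℝ → 𝔸 := fun t => Real.cos t • B + Real.sin t • C
  have hM : ∀ t, HasDerivAt M (A * M t - M t * A) t := by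
    intro t
    have hcomm : A * M t - M t * A
        = Real.cos t • (A * B - B * A) + Real.sin t • (A * C - C * A) := by
      simp only [M, mul_add, add_mul, mul_smul_comm, smul_mul_assoc, smul_sub]
      abel
    rw [hcomm, hB, hC, smul_neg, ← neg_smul, add_comm]
    exact ((Real.hasDerivAt_cos t).smul_const B).add ((Real.hasDerivAt_sin t).smul_const C)
  have hconj : ∀ t, HasDerivAt (fun t => exp (t • -A) * M t * exp (t • A)) 0 t := by
    intro t
    refine (((hasDerivAt_exp_smul_const (-A) t).mul (hM t)).mul
      (hasDerivAt_exp_smul_const' A t)).congr_deriv ?_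
    simp only [Pi.mul_apply]
    noncomm_ring
  have hconst : exp (θ • -A) * M θ * exp (θ • A) = B := by
    simpa [M] using is_const_of_deriv_eq_zero (fun t => (hconj t).differentiableAt)
      (fun t => (hconj t).deriv) θ 0
  let : NormedAlgebra ℚ 𝔸 := .restrictScalars ℚ ℝ 𝔸
  have hinv : exp (θ • A) * exp (θ • -A) = 1 := by
    rw [smul_neg, ← exp_add_of_commute (Commute.refl (θ • A)).neg_right, add_neg_cancel,
      exp_zero]
  calc exp (θ • A) * B * exp ((-θ) • A)
      = (exp (θ • A) * exp (θ • -A)) * M θ * (exp (θ • A) * exp (θ • -A)) := by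
        rw [← hconst, neg_smul, ← smul_neg]; simp only [mul_assoc]
    _ = M θ := by rw [hinv, one_mul, mul_one]

end Rotation

section ComplexRotation

open NormedSpace Complex

variable {𝔸 : Type*} [NormedRing 𝔸] [NormedAlgebra ℂ 𝔸] [CompleteSpace 𝔸]

theorem exp_I_smul_mul_mul_exp_neg_I_smul_of_commutator {H B K : 𝔸} (hB : H * B - B * H = K)
    (hK : H * K - K * H = B) (θ : ℝ) :
    exp ((I * θ) • H) * B * exp ((I * ↑(-θ)) • H)
      = (Real.cos θ : ℂ) • B + (I * Real.sin θ) • K := by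
  have hIB : I • H * B - B * I • H = I • K := by
    rw [smul_mul_assoc, mul_smul_comm, ← smul_sub, hB]
  have hIK : I • H * I • K - I • K * I • H = -B := by
    rw [smul_mul_smul_comm, smul_mul_smul_comm, ← smul_sub, hK, I_mul_I, neg_one_smul]
  have h := exp_smul_mul_mul_exp_neg_smul_of_commutator hIB hIK θ
  simp only [← Complex.coe_smul, smul_smul] at h
  simpa [mul_comm] using h

end ComplexRotation

namespace Matrix

variable {ι n R : Type*} [Fintype ι] [CommSemiring R]

lemma prod_update_apply_apply [DecidableEq ι] (M : ι → Matrix n n R) (s : ι) (A : Matrix n n R)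
    (r c : ι → n) :
    ∏ k, Function.update M s A k (r k) (c k)
      = A (r s) (c s) * ∏ k ∈ Finset.univ \ {s}, M k (r k) (c k) := by
  have h : ∀ k, Function.update M s A k (r k) (c k)
      = Function.update (fun k => M k (r k) (c k)) s (A (r s) (c s)) k := by
    intro k
    rcases eq_or_ne k s with rfl | hk <;> simp [*]
  simp only [h, Finset.prod_update_of_mem (Finset.mem_univ s)]

def piKron : MultilinearMap R (fun _ : ι => Matrix n n R) (Matrix (ι → n) (ι → n) R) where
  toFun M := of fun r c => ∏ k, M k (r k) (c k)
  map_update_add' M s A B := by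
    ext r c
    simp [prod_update_apply_apply, add_mul]
  map_update_smul' M s a A := by
    ext r c
    simp [prod_update_apply_apply, mul_assoc]

lemma piKron_apply (M : ι → Matrix n n R) (r c : ι → n) :
    piKron M r c = ∏ k, M k (r k) (c k) := rfl

lemma piKron_mul_piKron [DecidableEq ι] [Fintype n] (M N : ι → Matrix n n R) :
    piKron M * piKron N = piKron (M * N) := by
  ext r c
  simp only [mul_apply, piKron_apply, Pi.mul_apply, Finset.prod_univ_sum, Fintype.piFinset_univ,
    Finset.prod_mul_distrib]

lemma conjTranspose_piKron [StarRing R] (M : ι → Matrix n n R) :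
    (piKron M)ᴴ = piKron fun k => (M k)ᴴ := by
  ext r c
  simp [piKron_apply, conjTranspose_apply]

lemma piKron_one [DecidableEq n] : piKron (1 : ι → Matrix n n R) = 1 := by
  ext r c
  simp only [piKron_apply, Pi.one_apply, one_apply, Finset.prod_ite_zero, Finset.prod_const_one,
    funext_iff, Finset.mem_univ, true_imp_iff]

end Matrix

namespace FermionicAnyon

open Matrix Complex

attribute [local instance] Matrix.linftyOpNormedAddCommGroup Matrix.linftyOpNormedRing
  Matrix.linftyOpNormedAlgebra

abbrev Mat2 := Matrix (Fin 2) (Fin 2) ℂ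

section SingleMode

lemma conjTranspose_sigMat : sigMatᴴ = !![0, 0; 1, 0] := by
  ext a b; fin_cases a <;> fin_cases b <;> simp [sigMat, conjTranspose_apply]

lemma sigMat_mul_sigMat : sigMat * sigMat = 0 := by
  ext a b; fin_cases a <;> fin_cases b <;> simp [sigMat]

lemma conjTranspose_sigMat_mul_conjTranspose_sigMat : sigMatᴴ * sigMatᴴ = 0 := by
  rw [← conjTranspose_mul, sigMat_mul_sigMat, conjTranspose_zero]

lemma sigMat_mul_conjTranspose_sigMat_mul_sigMat : sigMat * (sigMatᴴ * sigMat) = sigMat := by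
  rw [conjTranspose_sigMat]; ext a b; fin_cases a <;> fin_cases b <;> simp [sigMat]

lemma conjTranspose_sigMat_mul_sigMat_mul_conjTranspose_sigMat :
    sigMatᴴ * (sigMat * sigMatᴴ) = sigMatᴴ := by
  simpa [conjTranspose_mul, mul_assoc] using
    congrArg conjTranspose sigMat_mul_conjTranspose_sigMat_mul_sigMat

lemma sigMat_mul_sigMat_mul (X : Mat2) : sigMat * (sigMat * X) = 0 := by
  rw [← mul_assoc, sigMat_mul_sigMat, zero_mul]

lemma conjTranspose_sigMat_mul_conjTranspose_sigMat_mul (X : Mat2) :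
    sigMatᴴ * (sigMatᴴ * X) = 0 := by
  rw [← mul_assoc, conjTranspose_sigMat_mul_conjTranspose_sigMat, zero_mul]

lemma sigMat_mul_conjTranspose_sigMat_add : sigMat * sigMatᴴ + sigMatᴴ * sigMat = 1 := by
  rw [conjTranspose_sigMat]; ext a b; fin_cases a <;> fin_cases b <;> simp [sigMat]

lemma conjTranspose_dMat_eq (φ : ℝ) :
    (dMat φ)ᴴ = sigMat * sigMatᴴ - exp (-(I * φ)) • (sigMatᴴ * sigMat) := by
  rw [conjTranspose_sigMat]
  ext a b; fin_cases a <;> fin_cases b <;>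
    simp [sigMat, dMat, conjTranspose_apply, ← Complex.exp_conj]

lemma conjTranspose_dMat_mul_dMat (φ : ℝ) : (dMat φ)ᴴ * dMat φ = 1 := by
  ext a b; fin_cases a <;> fin_cases b <;>
    simp [dMat, conjTranspose_apply, mul_apply, ← Complex.exp_conj, ← Complex.exp_add]

lemma dMat_mul_conjTranspose_dMat (φ : ℝ) : dMat φ * (dMat φ)ᴴ = 1 := by
  ext a b; fin_cases a <;> fin_cases b <;>
    simp [dMat, conjTranspose_apply, mul_apply, ← Complex.exp_conj, ← Complex.exp_add]

lemma conjTranspose_sigMat_mul_dMat (φ : ℝ) : sigMatᴴ * dMat φ = sigMatᴴ := by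
  rw [conjTranspose_sigMat]; ext a b; fin_cases a <;> fin_cases b <;> simp [dMat]

lemma conjTranspose_dMat_mul_sigMat (φ : ℝ) : (dMat φ)ᴴ * sigMat = sigMat := by
  simpa [conjTranspose_mul] using congrArg conjTranspose (conjTranspose_sigMat_mul_dMat φ)

lemma exp_smul_conjTranspose_sigMat_mul_sigMat (z : ℂ) :
    NormedSpace.exp (z • (sigMatᴴ * sigMat)) = sigMat * sigMatᴴ + exp z • (sigMatᴴ * sigMat) := by
  have h : z • (sigMatᴴ * sigMat) = diagonal ![0, z] := by
    rw [conjTranspose_sigMat]; ext a b; fin_cases a <;> fin_cases b <;> simp [sigMat]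
  rw [h, exp_diagonal, conjTranspose_sigMat]
  ext a b; fin_cases a <;> fin_cases b <;> simp [sigMat, ← Complex.exp_eq_exp_ℂ]

end SingleMode

section TwoSite

variable {m : ℕ} {i j : Fin m}

def twoSiteFamily (i j : Fin m) {α : Type*} (L X Md Y R : α) : Fin m → α := fun k =>
  if k = i then X else if k = j then Y else if k < i then L else if k < j then Md else R

lemma twoSiteFamily_map {α β : Type*} (f : α → β) (L X Md Y R : α) :
    (fun k => f (twoSiteFamily i j L X Md Y R k))
      = twoSiteFamily i j (f L) (f X) (f Md) (f Y) (f R) := by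
  funext k
  simp only [twoSiteFamily]
  split_ifs <;> rfl

lemma twoSiteFamily_map₂ {α β γ : Type*} (f : α → β → γ) (L X Md Y R : α)
    (L' X' Md' Y' R' : β) :
    (fun k => f (twoSiteFamily i j L X Md Y R k) (twoSiteFamily i j L' X' Md' Y' R' k))
      = twoSiteFamily i j (f L L') (f X X') (f Md Md') (f Y Y') (f R R') := by
  funext k
  simp only [twoSiteFamily]
  split_ifs <;> rfl

lemma twoSiteFamily_const {α : Type*} (a : α) : twoSiteFamily i j a a a a a = fun _ => a := by
  funext k
  simp only [twoSiteFamily, ite_self]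

lemma update_twoSiteFamily_left {α : Type*} (L X Md Y R X' : α) :
    Function.update (twoSiteFamily i j L X Md Y R) i X' = twoSiteFamily i j L X' Md Y R := by
  funext k
  rcases eq_or_ne k i with rfl | hk
  · simp [twoSiteFamily]
  · simp [twoSiteFamily, hk]

lemma update_twoSiteFamily_right (hij : i ≠ j) {α : Type*} (L X Md Y R Y' : α) :
    Function.update (twoSiteFamily i j L X Md Y R) j Y' = twoSiteFamily i j L X Md Y' R := by
  funext k
  rcases eq_or_ne k j with rfl | hk
  · simp [twoSiteFamily, hij.symm]
  · simp [twoSiteFamily, hk]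

/-- The operator `L ⊗ ⋯ ⊗ L ⊗ X ⊗ Md ⊗ ⋯ ⊗ Md ⊗ Y ⊗ R ⊗ ⋯ ⊗ R`, bilinear in the site
operators `X` at `i` and `Y` at `j`. -/
def twoSite (hij : i ≠ j) (L Md R : Mat2) :
    Mat2 →ₗ[ℂ] Mat2 →ₗ[ℂ] Matrix (Fin m → Fin 2) (Fin m → Fin 2) ℂ :=
  LinearMap.mk₂ ℂ (fun X Y => piKron (twoSiteFamily i j L X Md Y R))
    (fun X X' Y => by
      simpa only [update_twoSiteFamily_left] using
        piKron.map_update_add (twoSiteFamily i j L 0 Md Y R) i X X')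
    (fun c X Y => by
      simpa only [update_twoSiteFamily_left] using
        piKron.map_update_smul (twoSiteFamily i j L 0 Md Y R) i c X)
    (fun X Y Y' => by
      simpa only [update_twoSiteFamily_right hij] using
        piKron.map_update_add (twoSiteFamily i j L X Md 0 R) j Y Y')
    (fun c X Y => by
      simpa only [update_twoSiteFamily_right hij] using
        piKron.map_update_smul (twoSiteFamily i j L X Md 0 R) j c Y)

variable {hij : i ≠ j}

lemma twoSite_apply (L Md R X Y : Mat2) :
    twoSite hij L Md R X Y = piKron (twoSiteFamily i j L X Md Y R) := rfl

lemma twoSite_mul_twoSite (L Md R X Y L' Md' R' X' Y' : Mat2) :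
    twoSite hij L Md R X Y * twoSite hij L' Md' R' X' Y'
      = twoSite hij (L * L') (Md * Md') (R * R') (X * X') (Y * Y') := by
  rw [twoSite_apply, twoSite_apply, twoSite_apply, piKron_mul_piKron, ← twoSiteFamily_map₂]
  rfl

lemma conjTranspose_twoSite (L Md R X Y : Mat2) :
    (twoSite hij L Md R X Y)ᴴ = twoSite hij Lᴴ Mdᴴ Rᴴ Xᴴ Yᴴ := by
  rw [twoSite_apply, twoSite_apply, conjTranspose_piKron, twoSiteFamily_map]

lemma twoSite_one : twoSite hij 1 1 1 1 1 = 1 := by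
  rw [twoSite_apply, twoSiteFamily_const]
  exact piKron_one

lemma twoSite_one_right (L Md R X : Mat2) :
    twoSite hij L Md R X 1
      = twoSite hij L Md R X (sigMat * sigMatᴴ) + twoSite hij L Md R X (sigMatᴴ * sigMat) := by
  rw [← sigMat_mul_conjTranspose_sigMat_add, map_add]

lemma twoSite_conjTranspose_dMat_left (φ : ℝ) (L Md R Y : Mat2) :
    twoSite hij L Md R (dMat φ)ᴴ Y
      = twoSite hij L Md R (sigMat * sigMatᴴ) Y
        - exp (-(I * φ)) • twoSite hij L Md R (sigMatᴴ * sigMat) Y := by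
  rw [conjTranspose_dMat_eq, map_sub, map_smul, LinearMap.sub_apply, LinearMap.smul_apply]

variable (hij)

def leftSiteHom : Mat2 →+* Matrix (Fin m → Fin 2) (Fin m → Fin 2) ℂ where
  toFun X := twoSite hij 1 1 1 X 1
  map_one' := twoSite_one
  map_mul' X Y := by simp only [twoSite_mul_twoSite, mul_one]
  map_zero' := by simp
  map_add' X Y := by simp

def rightSiteHom : Mat2 →+* Matrix (Fin m → Fin 2) (Fin m → Fin 2) ℂ where
  toFun Y := twoSite hij 1 1 1 1 Y
  map_one' := twoSite_one
  map_mul' X Y := by simp only [twoSite_mul_twoSite, mul_one]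
  map_zero' := by simp
  map_add' X Y := by simp

lemma exp_twoSite_left (X : Mat2) :
    NormedSpace.exp (twoSite hij 1 1 1 X 1) = twoSite hij 1 1 1 (NormedSpace.exp X) 1 :=
  (NormedSpace.map_exp (leftSiteHom hij)
    (((twoSite hij 1 1 1).flip 1).continuous_of_finiteDimensional) X).symm

lemma exp_twoSite_right (Y : Mat2) :
    NormedSpace.exp (twoSite hij 1 1 1 1 Y) = twoSite hij 1 1 1 1 (NormedSpace.exp Y) :=
  (NormedSpace.map_exp (rightSiteHom hij)
    ((twoSite hij 1 1 1 1).continuous_of_finiteDimensional) Y).symm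

end TwoSite

noncomputable def hopping (m : ℕ) (φ : ℝ) (i j : Fin m) :
    Matrix (Fin m → Fin 2) (Fin m → Fin 2) ℂ :=
  (xi m φ i)ᴴ * xi m φ j + (xi m φ j)ᴴ * xi m φ i

section Operators

variable {m : ℕ} {i j : Fin m} (φ : ℝ) (hij : i < j)

include hij

lemma xi_eq_twoSite_left : xi m φ i = twoSite hij.ne (dMat φ) 1 1 sigMat 1 := by
  ext r c
  rw [twoSite_apply, piKron_apply, xi, of_apply]
  refine Finset.prod_congr rfl fun k _ => ?_
  rcases lt_trichotomy k i with hk | rfl | hk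
  · simp [twoSiteFamily, hk, hk.ne, (hk.trans hij).ne]
  · simp [twoSiteFamily]
  · simp only [twoSiteFamily, hk.ne', not_lt.2 hk.le, if_false, ite_self, one_apply]

lemma xi_eq_twoSite_right :
    xi m φ j = twoSite hij.ne (dMat φ) (dMat φ) 1 (dMat φ) sigMat := by
  ext r c
  rw [twoSite_apply, piKron_apply, xi, of_apply]
  refine Finset.prod_congr rfl fun k _ => ?_
  rcases lt_trichotomy k j with hk | rfl | hk
  · rcases lt_trichotomy k i with hki | rfl | hki
    · simp [twoSiteFamily, hk, hki, hki.ne, hk.ne]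
    · simp [twoSiteFamily, hk]
    · simp [twoSiteFamily, hk, hki.ne', hk.ne, not_lt.2 hki.le]
  · simp [twoSiteFamily, hij.ne']
  · simp only [twoSiteFamily, hk.ne', (hij.trans hk).ne', not_lt.2 hk.le,
      not_lt.2 (hij.trans hk).le, if_false, one_apply]

lemma conjTranspose_xi_left : (xi m φ i)ᴴ = twoSite hij.ne (dMat φ)ᴴ 1 1 sigMatᴴ 1 := by
  rw [xi_eq_twoSite_left φ hij, conjTranspose_twoSite, conjTranspose_one]

lemma conjTranspose_xi_right :
    (xi m φ j)ᴴ = twoSite hij.ne (dMat φ)ᴴ (dMat φ)ᴴ 1 (dMat φ)ᴴ sigMatᴴ := by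
  rw [xi_eq_twoSite_right φ hij, conjTranspose_twoSite, conjTranspose_one]

lemma exp_smul_conjTranspose_xi_mul_xi_left (z : ℂ) :
    NormedSpace.exp (z • ((xi m φ i)ᴴ * xi m φ i))
      = twoSite hij.ne 1 1 1 (sigMat * sigMatᴴ + exp z • (sigMatᴴ * sigMat)) 1 := by
  rw [conjTranspose_xi_left φ hij, xi_eq_twoSite_left φ hij, twoSite_mul_twoSite,
    conjTranspose_dMat_mul_dMat, mul_one, ← LinearMap.map_smul₂, exp_twoSite_left,
    exp_smul_conjTranspose_sigMat_mul_sigMat]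

lemma exp_smul_conjTranspose_xi_mul_xi_right (z : ℂ) :
    NormedSpace.exp (z • ((xi m φ j)ᴴ * xi m φ j))
      = twoSite hij.ne 1 1 1 1 (sigMat * sigMatᴴ + exp z • (sigMatᴴ * sigMat)) := by
  rw [conjTranspose_xi_right φ hij, xi_eq_twoSite_right φ hij, twoSite_mul_twoSite,
    conjTranspose_dMat_mul_dMat, mul_one, ← map_smul, exp_twoSite_right,
    exp_smul_conjTranspose_sigMat_mul_sigMat]

lemma hopping_eq :
    hopping m φ i j
      = twoSite hij.ne 1 (dMat φ) 1 sigMatᴴ sigMat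
        + twoSite hij.ne 1 (dMat φ)ᴴ 1 sigMat sigMatᴴ := by
  rw [hopping, conjTranspose_xi_left φ hij, conjTranspose_xi_right φ hij,
    xi_eq_twoSite_left φ hij, xi_eq_twoSite_right φ hij, twoSite_mul_twoSite, twoSite_mul_twoSite]
  simp only [conjTranspose_dMat_mul_dMat, conjTranspose_sigMat_mul_dMat,
    conjTranspose_dMat_mul_sigMat, one_mul, mul_one]

lemma hopping_commutators :
    hopping m φ i j * (xi m φ i)ᴴ - (xi m φ i)ᴴ * hopping m φ i j
        = (xi m φ j)ᴴ * NormedSpace.exp ((I * φ) • ((xi m φ i)ᴴ * xi m φ i)) ∧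
      hopping m φ i j * ((xi m φ j)ᴴ * NormedSpace.exp ((I * φ) • ((xi m φ i)ᴴ * xi m φ i)))
          - (xi m φ j)ᴴ * NormedSpace.exp ((I * φ) • ((xi m φ i)ᴴ * xi m φ i))
            * hopping m φ i j
        = (xi m φ i)ᴴ ∧
      hopping m φ i j * (xi m φ j)ᴴ - (xi m φ j)ᴴ * hopping m φ i j
        = (xi m φ i)ᴴ * NormedSpace.exp ((-(I * φ)) • ((xi m φ j)ᴴ * xi m φ j)) ∧
      hopping m φ i j * ((xi m φ i)ᴴ * NormedSpace.exp ((-(I * φ)) • ((xi m φ j)ᴴ * xi m φ j)))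
          - (xi m φ i)ᴴ * NormedSpace.exp ((-(I * φ)) • ((xi m φ j)ᴴ * xi m φ j))
            * hopping m φ i j
        = (xi m φ j)ᴴ := by
  rw [exp_smul_conjTranspose_xi_mul_xi_left φ hij, exp_smul_conjTranspose_xi_mul_xi_right φ hij,
    hopping_eq φ hij, conjTranspose_xi_left φ hij, conjTranspose_xi_right φ hij]
  -- Expand the site operators at `i` and `j` in the matrix units `σσ†, σ, σ†, σ†σ` and reduce.
  refine ⟨?_, ?_, ?_, ?_⟩ <;>
  simp only [twoSite_one_right, twoSite_conjTranspose_dMat_left, twoSite_mul_twoSite, add_mul,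
    mul_add, sub_mul, mul_sub, smul_mul_assoc, mul_smul_comm, mul_assoc, one_mul, mul_one, neg_mul,
    mul_neg, mul_zero, conjTranspose_dMat_mul_dMat, dMat_mul_conjTranspose_dMat,
    conjTranspose_sigMat_mul_conjTranspose_sigMat, sigMat_mul_conjTranspose_sigMat_mul_sigMat,
    conjTranspose_sigMat_mul_sigMat_mul_conjTranspose_sigMat, sigMat_mul_sigMat_mul,
    conjTranspose_sigMat_mul_conjTranspose_sigMat_mul, map_smul, map_zero, LinearMap.smul_apply,
    LinearMap.zero_apply, smul_zero, add_zero, zero_add, sub_zero] <;>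
  match_scalars <;> simp [← Complex.exp_add]

end Operators

end FermionicAnyon

/-- **Nonlinear conjugation identities for the fermionic-anyon beam splitter.** For modes
`i < j` and real `θ`:
`BS_{ij}(θ)·ξᵢ†·BS_{ij}(−θ) = cos θ·ξᵢ† + i·sin θ·ξⱼ†·exp(iφ·ξᵢ†ξᵢ)` and
`BS_{ij}(θ)·ξⱼ†·BS_{ij}(−θ) = cos θ·ξⱼ† + i·sin θ·ξᵢ†·exp(−iφ·ξⱼ†ξⱼ)`. -/
theorem fermionic_anyon_bs_conjugation (m : ℕ) (φ : ℝ) (i j : Fin m) (hij : i < j)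
    (θ : ℝ) :
    (bs m φ i j θ * (xi m φ i)ᴴ * bs m φ i j (-θ)
      = ((Real.cos θ : ℂ)) • (xi m φ i)ᴴ
        + (Complex.I * Real.sin θ) •
            ((xi m φ j)ᴴ * NormedSpace.exp ((Complex.I * φ) • ((xi m φ i)ᴴ * xi m φ i)))) ∧
    (bs m φ i j θ * (xi m φ j)ᴴ * bs m φ i j (-θ)
      = ((Real.cos θ : ℂ)) • (xi m φ j)ᴴ
        + (Complex.I * Real.sin θ) •
            ((xi m φ i)ᴴ *
              NormedSpace.exp ((-(Complex.I * φ)) • ((xi m φ j)ᴴ * xi m φ j)))) := by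
  let : NormedRing (Matrix (Fin m → Fin 2) (Fin m → Fin 2) ℂ) := Matrix.linftyOpNormedRing
  let : NormedAlgebra ℂ (Matrix (Fin m → Fin 2) (Fin m → Fin 2) ℂ) :=
    Matrix.linftyOpNormedAlgebra
  obtain ⟨hBi, hKi, hBj, hKj⟩ := FermionicAnyon.hopping_commutators φ hij
  exact ⟨exp_I_smul_mul_mul_exp_neg_I_smul_of_commutator hBi hKi θ,
    exp_I_smul_mul_mul_exp_neg_I_smul_of_commutator hBj hKj θ⟩
end

section
/- Take m = 2 fermionic-anyon modes on (ℂ²)^{⊗2} ≅ ℂ⁴. For every real θ, the beam splitter BS₁₂(θ) = exp(iθ(ξ₁†ξ₂ + ξ₂†ξ₁)) leaves the doubly occupied state invariant: BS₁₂(θ)·|1, 1⟩ = |1, 1⟩. (Fermionic anyons obey the Pauli exclusion principle under beam splitters for every value of the statistical parameter φ.) -/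
open scoped BigOperators
open Matrix

/-- The tensor-product standard basis vector `|n₁,…,n_m⟩` of `(ℂ²)^{⊗m}`, with the second
basis vector of `ℂ²` representing an occupied mode. -/
noncomputable def ket {m : ℕ} (n : Fin m → Fin 2) : (Fin m → Fin 2) → ℂ :=
  Pi.single n 1


/-!
Each term `ξᵢ†ξⱼ` (`i ≠ j`) of the beam-splitter generator kills `|1,1⟩`: the tensor factor of
`ξⱼ` on mode `i` is diagonal (`D` or `I₂`), so `ξⱼ` keeps mode `i` occupied, and `ξᵢ†` annihilates
every state in which mode `i` is occupied because the row of `σ` for the occupied level vanishes.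
A vector killed by a matrix is fixed by its exponential.
-/

open Function

open scoped Norms.Operator in
theorem Matrix.exp_mulVec_eq_self_of_mulVec_eq_zero {𝕂 n : Type*} [RCLike 𝕂] [Fintype n]
    [DecidableEq n] {M : Matrix n n 𝕂} {v : n → 𝕂} (h : M *ᵥ v = 0) :
    NormedSpace.exp M *ᵥ v = v := by
  have hseries := (NormedSpace.exp_series_hasSum_exp' (𝕂 := 𝕂) M).map
    (mulVec.addMonoidHomLeft v) (continuous_id.matrix_mulVec continuous_const)
  have hterm : ∀ k ≠ 0, (((k.factorial : 𝕂)⁻¹) • M ^ k) *ᵥ v = 0 := by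
    intro k hk
    obtain ⟨k, rfl⟩ := Nat.exists_eq_succ_of_ne_zero hk
    rw [smul_mulVec, pow_succ, ← mulVec_mulVec, h, mulVec_zero, smul_zero]
  exact (hseries.unique (hasSum_single 0 hterm)).trans (by simp)

lemma dMat_apply_of_ne {φ : ℝ} {a b : Fin 2} (h : a ≠ b) : dMat φ a b = 0 := by
  fin_cases a <;> fin_cases b <;> simp_all [dMat]

lemma sigMat_one_apply (b : Fin 2) : sigMat 1 b = 0 := by
  fin_cases b <;> rfl

section

variable {m : ℕ} {φ : ℝ} {i j : Fin m}

lemma xi_apply_eq_zero_of_apply_ne (hij : i ≠ j) {r c : Fin m → Fin 2} (h : r i ≠ c i) :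
    xi m φ j r c = 0 := by
  refine Finset.prod_eq_zero (Finset.mem_univ i) ?_
  rw [if_neg hij, if_neg h]
  split_ifs
  · exact dMat_apply_of_ne h
  · rfl

lemma xi_apply_eq_zero_of_apply_eq_one {r c : Fin m → Fin 2} (h : r i = 1) :
    xi m φ i r c = 0 :=
  Finset.prod_eq_zero (Finset.mem_univ i) (by simp [h, sigMat_one_apply])

lemma support_xi_mulVec_subset (hij : i ≠ j) {v : (Fin m → Fin 2) → ℂ}
    (hv : support v ⊆ {c | c i = 1}) : support (xi m φ j *ᵥ v) ⊆ {r | r i = 1} := by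
  intro r hr
  by_contra hri
  refine hr (Finset.sum_eq_zero fun c _ => ?_)
  by_cases hci : c i = 1
  · exact mul_eq_zero_of_left (xi_apply_eq_zero_of_apply_ne hij (hci ▸ hri)) _
  · exact mul_eq_zero_of_right _ (notMem_support.mp fun hc => hci (hv hc))

lemma conjTranspose_xi_mulVec_eq_zero {v : (Fin m → Fin 2) → ℂ}
    (hv : support v ⊆ {c | c i = 1}) : (xi m φ i)ᴴ *ᵥ v = 0 := by
  funext r
  refine Finset.sum_eq_zero fun c _ => ?_
  by_cases hci : c i = 1
  · exact mul_eq_zero_of_left (by simp [xi_apply_eq_zero_of_apply_eq_one hci]) _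
  · exact mul_eq_zero_of_right _ (notMem_support.mp fun hc => hci (hv hc))

lemma conjTranspose_xi_mul_xi_mulVec_eq_zero (hij : i ≠ j) {v : (Fin m → Fin 2) → ℂ}
    (hv : support v ⊆ {c | c i = 1}) : ((xi m φ i)ᴴ * xi m φ j) *ᵥ v = 0 := by
  rw [← mulVec_mulVec]
  exact conjTranspose_xi_mulVec_eq_zero (support_xi_mulVec_subset hij hv)

lemma support_ket_subset {n : Fin m → Fin 2} (hn : n i = 1) :
    support (ket n) ⊆ {c | c i = 1} :=
  Pi.support_single_subset.trans (by simpa using hn)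

end

/-- **Pauli exclusion principle for fermionic anyons under beam splitters.** On two
fermionic-anyon modes, for every real `θ`, the beam splitter
`BS₁₂(θ) = exp(iθ(ξ₁†ξ₂ + ξ₂†ξ₁))` leaves the doubly occupied state invariant:
`BS₁₂(θ)·|1,1⟩ = |1,1⟩`, for every value of the statistical parameter `φ`. -/
theorem fermionic_anyon_pauli_exclusion (φ : ℝ) (θ : ℝ) :
    (NormedSpace.exp ((Complex.I * θ) •
        ((xi 2 φ 0)ᴴ * xi 2 φ 1 + (xi 2 φ 1)ᴴ * xi 2 φ 0))).mulVec (ket ![1, 1])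
      = ket ![1, 1] := by
  have hocc (i : Fin 2) : support (ket ![1, 1]) ⊆ {c | c i = 1} :=
    support_ket_subset (by fin_cases i <;> rfl)
  apply Matrix.exp_mulVec_eq_self_of_mulVec_eq_zero
  rw [smul_mulVec, add_mulVec, conjTranspose_xi_mul_xi_mulVec_eq_zero (by decide) (hocc 0),
    conjTranspose_xi_mul_xi_mulVec_eq_zero (by decide) (hocc 1), add_zero, smul_zero]
end
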